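/- arXiv:2012.08289 — 2 statements merged into one kernel-verified Lean document; each statement's English description precedes it below -/
import Mathlib

section
/- Let f : [a,b] → ℝ^d be C⁴ with f(a) = f(b) = 0 and f'(a) = f'(b) = 0 (i.e., f and f' vanish at both endpoints). Then ‖f‖_{L^∞([a,b])} ≤ c · (b−a)⁴ · ‖f⁽⁴⁾‖_{L^∞([a,b])} for a universal constant c (e.g. c = 1 suffices after suitable normalization; any explicit constant such as 1/16 · 1/24 is acceptable). -/
/-!
Expand `f` to third order at `a`: since `f a = f' a = 0`, `f` is, up to an error `O(M h⁴)`
with `h = b - a`, the cubic `p(s) = (s - a)² / 2 • A + (s - a)³ / 6 • B` with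
`A = f'' a`, `B = f''' a`. Expanding `f` and `f'` at `a` and evaluating at `b`, where both
vanish, shows that `p` and `p'` are `O(M h⁴)` and `O(M h³)` at `b`. A cubic with a double
zero at `a` is controlled on `[a, b]` by its value and slope at `b`, so `p`, and hence `f`,
is `O(M h⁴)` on `[a, b]`.
-/

open Set Nat

variable {E : Type*} [NormedAddCommGroup E] [NormedSpace ℝ E]

theorem norm_sub_taylor_le_of_contDiff {f : ℝ → E} {n : ℕ} (hf : ContDiff ℝ (n + 1) f)
    {a b M x : ℝ} (hab : a < b) (hx : x ∈ Icc a b)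
    (hM : ∀ y ∈ Icc a b, ‖iteratedDeriv (n + 1) f y‖ ≤ M) :
    ‖f x - ∑ k ∈ Finset.range (n + 1), ((k ! : ℝ)⁻¹ * (x - a) ^ k) • iteratedDeriv k f a‖
      ≤ M * (x - a) ^ (n + 1) / n ! := by
  have hs : UniqueDiffOn ℝ (Icc a b) := uniqueDiffOn_Icc hab
  have hderiv : ∀ k ≤ n + 1, ∀ y ∈ Icc a b,
      iteratedDerivWithin k f (Icc a b) y = iteratedDeriv k f y := fun k hk y hy =>
    iteratedDerivWithin_eq_iteratedDeriv hs (hf.contDiffAt.of_le (by exact_mod_cast hk)) hy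
  have ha : a ∈ Icc a b := left_mem_Icc.mpr hab.le
  have := taylor_mean_remainder_bound hab.le hf.contDiffOn hx
    fun y hy => (hderiv (n + 1) le_rfl y hy).symm ▸ hM y hy
  rwa [taylor_within_apply, Finset.sum_congr rfl fun k hk =>
    by rw [hderiv k (by simp at hk; omega) a ha]] at this

theorem norm_smul_sq_add_smul_cube_le (u v : E) {r : ℝ} (hr₀ : 0 ≤ r) (hr₁ : r ≤ 1) :
    ‖r ^ 2 • u + r ^ 3 • v‖ ≤ 5 * ‖u + v‖ + 2 * ‖(2 : ℝ) • u + (3 : ℝ) • v‖ := by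
  have hu : u = (3 : ℝ) • (u + v) - ((2 : ℝ) • u + (3 : ℝ) • v) := by module
  have hv : v = ((2 : ℝ) • u + (3 : ℝ) • v) - (2 : ℝ) • (u + v) := by module
  have hpow : ∀ k, ‖r ^ k‖ ≤ 1 := fun k => by
    rw [norm_pow, Real.norm_of_nonneg hr₀]; exact pow_le_one₀ hr₀ hr₁
  calc ‖r ^ 2 • u + r ^ 3 • v‖ ≤ ‖u‖ + ‖v‖ := by
        refine (norm_add_le _ _).trans (add_le_add ?_ ?_) <;>
          exact (norm_smul_le _ _).trans (mul_le_of_le_one_left (norm_nonneg _) (hpow _))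
    _ ≤ (3 * ‖u + v‖ + ‖(2 : ℝ) • u + (3 : ℝ) • v‖)
        + (‖(2 : ℝ) • u + (3 : ℝ) • v‖ + 2 * ‖u + v‖) := by
        gcongr
        · conv_lhs => rw [hu]
          refine (norm_sub_le _ _).trans ?_
          rw [norm_smul, Real.norm_ofNat]
        · conv_lhs => rw [hv]
          refine (norm_sub_le _ _).trans ?_
          rw [norm_smul, Real.norm_ofNat]
    _ = 5 * ‖u + v‖ + 2 * ‖(2 : ℝ) • u + (3 : ℝ) • v‖ := by ring

theorem norm_cubic_le_of_le_endpoint (A B : E) {h s : ℝ} (hs : 0 ≤ s) (hsh : s ≤ h) :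
    ‖(s ^ 2 / 2) • A + (s ^ 3 / 6) • B‖
      ≤ 5 * ‖(h ^ 2 / 2) • A + (h ^ 3 / 6) • B‖ + 2 * h * ‖h • A + (h ^ 2 / 2) • B‖ := by
  rcases (hs.trans hsh).eq_or_lt with rfl | hh
  · obtain rfl : s = 0 := le_antisymm hsh hs
    simp
  have hrescale : (s ^ 2 / 2) • A + (s ^ 3 / 6) • B
      = (s / h) ^ 2 • ((h ^ 2 / 2) • A) + (s / h) ^ 3 • ((h ^ 3 / 6) • B) := by
    simp only [smul_smul]
    congr 2 <;> field_simp
  have hslope : (2 : ℝ) • ((h ^ 2 / 2) • A) + (3 : ℝ) • ((h ^ 3 / 6) • B)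
      = h • (h • A + (h ^ 2 / 2) • B) := by
    module
  have := norm_smul_sq_add_smul_cube_le ((h ^ 2 / 2) • A) ((h ^ 3 / 6) • B)
    (div_nonneg hs hh.le) ((div_le_one hh).mpr hsh)
  rwa [← hrescale, hslope, norm_smul, Real.norm_of_nonneg hh.le, ← mul_assoc] at this

variable {f : ℝ → E} {a b M : ℝ}

theorem norm_sub_cubic_taylor_le_of_double_zero (hf : ContDiff ℝ 4 f) (hab : a < b)
    (hfa : f a = 0) (hfa' : deriv f a = 0) (hM : ∀ y ∈ Icc a b, ‖iteratedDeriv 4 f y‖ ≤ M)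
    {x : ℝ} (hx : x ∈ Icc a b) :
    ‖f x - (((x - a) ^ 2 / 2) • iteratedDeriv 2 f a + ((x - a) ^ 3 / 6) • iteratedDeriv 3 f a)‖
      ≤ M * (x - a) ^ 4 / 6 := by
  have := norm_sub_taylor_le_of_contDiff (n := 3) hf hab hx hM
  norm_num [Finset.sum_range_succ, factorial, hfa, hfa', div_eq_inv_mul] at this ⊢
  exact this

theorem norm_deriv_sub_quadratic_taylor_le_of_double_zero (hf : ContDiff ℝ 4 f) (hab : a < b)
    (hfa' : deriv f a = 0) (hM : ∀ y ∈ Icc a b, ‖iteratedDeriv 4 f y‖ ≤ M) :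
    ‖deriv f b - ((b - a) • iteratedDeriv 2 f a + ((b - a) ^ 2 / 2) • iteratedDeriv 3 f a)‖
      ≤ M * (b - a) ^ 3 / 2 := by
  have := norm_sub_taylor_le_of_contDiff (n := 2) hf.deriv' hab (right_mem_Icc.mpr hab.le)
    fun y hy => by rw [← iteratedDeriv_succ']; exact hM y hy
  norm_num [Finset.sum_range_succ, ← iteratedDeriv_succ', hfa', div_eq_inv_mul] at this ⊢
  exact this

theorem norm_le_of_double_zeros (hf : ContDiff ℝ 4 f) (hab : a < b)
    (hfa : f a = 0) (hfb : f b = 0) (hfa' : deriv f a = 0) (hfb' : deriv f b = 0)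
    (hM : ∀ y ∈ Icc a b, ‖iteratedDeriv 4 f y‖ ≤ M) {t : ℝ} (ht : t ∈ Icc a b) :
    ‖f t‖ ≤ 2 * (b - a) ^ 4 * M := by
  set p : ℝ → E := fun s ↦ (s ^ 2 / 2) • iteratedDeriv 2 f a + (s ^ 3 / 6) • iteratedDeriv 3 f a
  have hremainder := norm_sub_cubic_taylor_le_of_double_zero hf hab hfa hfa' hM ht
  have hvalue := norm_sub_cubic_taylor_le_of_double_zero hf hab hfa hfa' hM
    (right_mem_Icc.mpr hab.le)
  have hslope := norm_deriv_sub_quadratic_taylor_le_of_double_zero hf hab hfa' hM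
  rw [hfb, zero_sub, norm_neg] at hvalue
  rw [hfb', zero_sub, norm_neg] at hslope
  have hcubic := norm_cubic_le_of_le_endpoint (iteratedDeriv 2 f a) (iteratedDeriv 3 f a)
    (sub_nonneg.mpr ht.1) (sub_le_sub_right ht.2 a)
  have hM₀ : 0 ≤ M := (norm_nonneg _).trans (hM a (left_mem_Icc.mpr hab.le))
  have hpow : (t - a) ^ 4 ≤ (b - a) ^ 4 := by gcongr; exacts [sub_nonneg.mpr ht.1, ht.2]
  calc ‖f t‖ ≤ ‖f t - p (t - a)‖ + ‖p (t - a)‖ := norm_le_norm_sub_add _ _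
    _ ≤ M * (t - a) ^ 4 / 6
          + (5 * (M * (b - a) ^ 4 / 6) + 2 * (b - a) * (M * (b - a) ^ 3 / 2)) := by
        gcongr
        exact hcubic.trans (by gcongr)
    _ ≤ 2 * (b - a) ^ 4 * M := by nlinarith [mul_le_mul_of_nonneg_left hpow hM₀]

theorem sup_bound_double_zeros :
    ∃ c : ℝ, 0 < c ∧ ∀ (d : ℕ) (f : ℝ → EuclideanSpace ℝ (Fin d)) (a b M : ℝ),
      ContDiff ℝ 4 f → a < b →
      f a = 0 → f b = 0 → deriv f a = 0 → deriv f b = 0 →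
      (∀ s ∈ Icc a b, ‖iteratedDeriv 4 f s‖ ≤ M) →
      ∀ t ∈ Icc a b, ‖f t‖ ≤ c * (b - a) ^ 4 * M :=
  ⟨2, two_pos, fun _ _ _ _ _ hf hab hfa hfb hfa' hfb' hM _ ht ↦
    norm_le_of_double_zeros hf hab hfa hfb hfa' hfb' hM ht⟩
end

section
/- (Stability of the interpolation b.v.p. in the scalar comparison form) Suppose w : [0,ℓ] → ℝ^n is C² and the function φ(t) = |w(t)| satisfies φ'' ≥ −K·φ in the distributional sense on (0,ℓ) for some K ≥ 0 with ℓ√K ≤ π/2, and w(0) = 0. Then φ(t) ≤ φ(ℓ) · sin(√K t)/sin(√K ℓ) for t ∈ [0,ℓ] (with the convention sin(√K t)/sin(√K ℓ) → t/ℓ as K → 0); in particular sup_{[0,ℓ]} |w| ≤ |w(ℓ)|. -/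
/-!
Compare `φ = |w|` with the Jacobi field `ψ(t) = φ(ℓ) sin(√K t) / sin(√K ℓ)`, which solves
`ψ'' + Kψ = 0` and agrees with `φ` at both ends. Since `√K ℓ < π` there is `α² > K` for which
`v(t) = cos(α (t - ℓ/2))` is positive on `[0, ℓ]`, a strict supersolution. If `φ > ψ` somewhere,
the least `m` with `φ - ψ ≤ m v` is positive and is attained at an interior point `t₀`, where
`φ(t₀) > 0`; there `(φ - ψ - m v)'' > -K (φ - ψ - m v) = 0`, contradicting the maximum of
`φ - ψ - m v` at `t₀`. Finally `ψ ≤ φ(ℓ)` because `sin(√K ·)` increases on `[0, ℓ]` when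
`√K ℓ ≤ π/2`.
-/

open Set Real Filter Topology

theorem IsLocalMax.iteratedDeriv_two_nonpos {f : ℝ → ℝ} {x : ℝ} (h : IsLocalMax f x)
    (hc : ContinuousAt f x) : iteratedDeriv 2 f x ≤ 0 := by
  rw [iteratedDeriv_eq_iterate]
  by_contra! hpos
  have hmin : IsLocalMin f x := isLocalMin_of_deriv_deriv_pos hpos h.deriv_eq_zero hc
  have hconst : f =ᶠ[𝓝 x] fun _ => f x := by
    filter_upwards [h, hmin] with y hy₁ hy₂ using le_antisymm hy₁ hy₂
  exact hpos.ne' (by simpa using hconst.deriv.deriv_eq)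

theorem exists_interior_touch_of_boundary_nonpos {a b : ℝ} {f v : ℝ → ℝ}
    (hf : ContinuousOn f (Icc a b)) (hv : ContinuousOn v (Icc a b))
    (hv0 : ∀ t ∈ Icc a b, 0 < v t) (ha : f a ≤ 0) (hb : f b ≤ 0) {t₁ : ℝ}
    (ht₁ : t₁ ∈ Icc a b) (hft₁ : 0 < f t₁) :
    ∃ m > 0, ∃ t₀ ∈ Ioo a b, f t₀ = m * v t₀ ∧ ∀ t ∈ Icc a b, f t ≤ m * v t := by
  obtain ⟨t₀, ht₀, hmax⟩ :=
    isCompact_Icc.exists_isMaxOn ⟨t₁, ht₁⟩ (hf.div hv fun t ht => (hv0 t ht).ne')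
  set m := f t₀ / v t₀
  have hm : 0 < m := (div_pos hft₁ (hv0 t₁ ht₁)).trans_le (hmax ht₁)
  have heq : f t₀ = m * v t₀ := (div_mul_cancel₀ _ (hv0 t₀ ht₀).ne').symm
  have hft₀ : 0 < f t₀ := heq ▸ mul_pos hm (hv0 t₀ ht₀)
  refine ⟨m, hm, t₀, ⟨?_, ?_⟩, heq, fun t ht => (div_le_iff₀ (hv0 t ht)).1 (hmax ht)⟩
  · exact ht₀.1.lt_of_ne (by rintro rfl; linarith)
  · exact ht₀.2.lt_of_ne (by rintro rfl; linarith)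

theorem le_of_subsolution_of_supersolution {K a b : ℝ} {φ ψ v : ℝ → ℝ}
    (hφ : ContinuousOn φ (Icc a b))
    (hφ2 : ∀ t ∈ Ioo a b, 0 < φ t → ContDiffAt ℝ 2 φ t)
    (hφK : ∀ t ∈ Ioo a b, 0 < φ t → -K * φ t ≤ iteratedDeriv 2 φ t)
    (hψ : ContDiffOn ℝ 2 ψ (Icc a b))
    (hψK : ∀ t ∈ Ioo a b, 0 ≤ ψ t ∧ iteratedDeriv 2 ψ t ≤ -K * ψ t)
    (hv : ContDiffOn ℝ 2 v (Icc a b))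
    (hvK : ∀ t ∈ Icc a b, 0 < v t ∧ iteratedDeriv 2 v t < -K * v t)
    (ha : φ a ≤ ψ a) (hb : φ b ≤ ψ b) :
    ∀ t ∈ Icc a b, φ t ≤ ψ t := by
  by_contra! ⟨t₁, ht₁, hlt⟩
  obtain ⟨m, hm, t₀, ht₀, heq, hle⟩ :=
    exists_interior_touch_of_boundary_nonpos (hφ.sub hψ.continuousOn) hv.continuousOn
      (fun t ht => (hvK t ht).1) (sub_nonpos.2 ha) (sub_nonpos.2 hb) ht₁ (sub_pos.2 hlt)
  simp only [Pi.sub_apply] at heq hle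
  have hnhds : Icc a b ∈ 𝓝 t₀ := Icc_mem_nhds ht₀.1 ht₀.2
  obtain ⟨hv0, hvK₀⟩ := hvK t₀ (Ioo_subset_Icc_self ht₀)
  obtain ⟨hψ0, hψK₀⟩ := hψK t₀ ht₀
  have hφ0 : 0 < φ t₀ := by linarith [mul_pos hm hv0]
  have hφ₀ := hφ2 t₀ ht₀ hφ0
  have hψ₀ := hψ.contDiffAt hnhds
  have hmv₀ : ContDiffAt ℝ 2 (fun t => m * v t) t₀ := contDiffAt_const.mul (hv.contDiffAt hnhds)
  set p := fun t => φ t - ψ t - m * v t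
  have hmax : IsLocalMax p t₀ := Filter.mem_of_superset hnhds fun t ht => by
    show p t ≤ p t₀
    linarith [hle t ht]
  have hp : iteratedDeriv 2 p t₀ =
      iteratedDeriv 2 φ t₀ - iteratedDeriv 2 ψ t₀ - m * iteratedDeriv 2 v t₀ := by
    rw [iteratedDeriv_fun_sub (hφ₀.sub hψ₀) hmv₀, iteratedDeriv_fun_sub hφ₀ hψ₀,
      iteratedDeriv_const_mul_field]
  have hp_nonpos := hmax.iteratedDeriv_two_nonpos
    ((hφ₀.continuousAt.sub hψ₀.continuousAt).sub hmv₀.continuousAt)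
  have hmvK : m * iteratedDeriv 2 v t₀ < m * (-K * v t₀) := mul_lt_mul_of_pos_left hvK₀ hm
  have hKtouch : -K * φ t₀ + K * ψ t₀ = m * (-K * v t₀) := by linear_combination (-K) * heq
  linarith [hφK t₀ ht₀ hφ0]

theorem iteratedDeriv_two_cos_mul_sub (α c t : ℝ) :
    iteratedDeriv 2 (fun t => cos (α * (t - c))) t = -α ^ 2 * cos (α * (t - c)) := by
  rw [iteratedDeriv_comp_sub_const 2 (fun x => cos (α * x)),
    iteratedDeriv_comp_const_mul contDiff_cos]
  simp [iteratedDeriv_succ]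

theorem iteratedDeriv_two_sin_mul (r t : ℝ) :
    iteratedDeriv 2 (fun t => sin (r * t)) t = -r ^ 2 * sin (r * t) := by
  rw [iteratedDeriv_comp_const_mul contDiff_sin]
  simp [iteratedDeriv_succ]

theorem exists_pos_strictSupersolution {K a b : ℝ} (hab : a < b) (h : √K * (b - a) < π) :
    ∃ v : ℝ → ℝ, ContDiff ℝ 2 v ∧ ∀ t ∈ Icc a b, 0 < v t ∧ iteratedDeriv 2 v t < -K * v t := by
  obtain ⟨α, hKα, hαπ⟩ := exists_between ((lt_div_iff₀ (sub_pos.2 hab)).2 h)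
  have hα : 0 < α := (sqrt_nonneg K).trans_lt hKα
  have hKα2 : K < α ^ 2 := (sqrt_lt' hα).1 hKα
  have hαba : α * (b - a) < π := (lt_div_iff₀ (sub_pos.2 hab)).1 hαπ
  refine ⟨fun t => cos (α * (t - (a + b) / 2)), by fun_prop, fun t ht => ?_⟩
  have hpos : 0 < cos (α * (t - (a + b) / 2)) := by
    apply cos_pos_of_mem_Ioo
    constructor <;> nlinarith [ht.1, ht.2]
  refine ⟨hpos, ?_⟩
  rw [iteratedDeriv_two_cos_mul_sub]
  nlinarith

theorem norm_le_mul_div_of_jacobi {E : Type*} [NormedAddCommGroup E] [InnerProductSpace ℝ E]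
    {K ℓ : ℝ} {w : ℝ → E} {s : ℝ → ℝ} (hℓ : 0 < ℓ) (hKℓ : √K * ℓ < π)
    (hw : ContDiff ℝ 2 w) (h0 : w 0 = 0)
    (hineq : ∀ t ∈ Ioo 0 ℓ, 0 < ‖w t‖ → -K * ‖w t‖ ≤ iteratedDeriv 2 (fun s => ‖w s‖) t)
    (hs : ContDiff ℝ 2 s) (hsK : ∀ t, iteratedDeriv 2 s t = -K * s t)
    (hsℓ : 0 < s ℓ) (hs_mono : ∀ t ∈ Icc 0 ℓ, 0 ≤ s t ∧ s t ≤ s ℓ) :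
    (∀ t ∈ Icc 0 ℓ, ‖w t‖ ≤ ‖w ℓ‖ * (s t / s ℓ)) ∧ ∀ t ∈ Icc 0 ℓ, ‖w t‖ ≤ ‖w ℓ‖ := by
  obtain ⟨v, hv, hvK⟩ := exists_pos_strictSupersolution hℓ (by simpa using hKℓ)
  have hψ : ContDiff ℝ 2 fun t => ‖w ℓ‖ * (s t / s ℓ) := by fun_prop
  have hψK : ∀ t, iteratedDeriv 2 (fun t => ‖w ℓ‖ * (s t / s ℓ)) t =
      -K * (‖w ℓ‖ * (s t / s ℓ)) := fun t => by
    rw [iteratedDeriv_const_mul_field, iteratedDeriv_div_const, hsK]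
    ring
  have hψ0 : ∀ t ∈ Icc 0 ℓ, 0 ≤ ‖w ℓ‖ * (s t / s ℓ) := fun t ht =>
    mul_nonneg (norm_nonneg _) (div_nonneg (hs_mono t ht).1 hsℓ.le)
  have hcmp : ∀ t ∈ Icc 0 ℓ, ‖w t‖ ≤ ‖w ℓ‖ * (s t / s ℓ) :=
    le_of_subsolution_of_supersolution hw.continuous.norm.continuousOn
      (fun t _ ht => hw.contDiffAt.norm ℝ (norm_pos_iff.1 ht)) hineq hψ.contDiffOn
      (fun t ht => ⟨hψ0 t (Ioo_subset_Icc_self ht), (hψK t).le⟩)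
      hv.contDiffOn hvK (by simpa [h0] using hψ0 0 ⟨le_rfl, hℓ.le⟩)
      (by rw [div_self hsℓ.ne', mul_one])
  refine ⟨hcmp, fun t ht => (hcmp t ht).trans ?_⟩
  exact mul_le_of_le_one_right (norm_nonneg _) ((div_le_one hsℓ).2 (hs_mono t ht).2)

theorem scalar_comparison_stability (n : ℕ) (K ℓ : ℝ) (hK : 0 ≤ K) (hℓ : 0 < ℓ)
    (hshort : ℓ * Real.sqrt K ≤ Real.pi / 2)
    (w : ℝ → EuclideanSpace ℝ (Fin n)) (hw : ContDiff ℝ 2 w) (h0 : w 0 = 0)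
    (hineq : ∀ t ∈ Ioo 0 ℓ, 0 < ‖w t‖ →
      -K * ‖w t‖ ≤ iteratedDeriv 2 (fun s => ‖w s‖) t) :
    (∀ t ∈ Icc 0 ℓ, ‖w t‖ ≤ ‖w ℓ‖ *
      (if K = 0 then t / ℓ
       else Real.sin (Real.sqrt K * t) / Real.sin (Real.sqrt K * ℓ))) ∧
    ∀ t ∈ Icc 0 ℓ, ‖w t‖ ≤ ‖w ℓ‖ := by
  have hKℓ : √K * ℓ < π := by nlinarith [pi_pos]
  rcases hK.eq_or_lt with rfl | hK
  · simpa using norm_le_mul_div_of_jacobi (s := fun t => t) hℓ hKℓ hw h0 hineq (by fun_prop)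
      (by simp [iteratedDeriv_fun_id]) hℓ fun t ht => ⟨ht.1, ht.2⟩
  · have hsqrt : 0 < √K := sqrt_pos.2 hK
    have hsin_mono : ∀ t ∈ Icc 0 ℓ, 0 ≤ sin (√K * t) ∧ sin (√K * t) ≤ sin (√K * ℓ) :=
      fun t ht => ⟨sin_nonneg_of_nonneg_of_le_pi (mul_nonneg hsqrt.le ht.1) (by nlinarith [ht.2]),
        sin_le_sin_of_le_of_le_pi_div_two (by nlinarith [ht.1, pi_pos]) (by linarith)
          (by nlinarith [ht.2])⟩
    simpa [hK.ne'] using norm_le_mul_div_of_jacobi (s := fun t => sin (√K * t)) hℓ hKℓ hw h0 hineq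
      (by fun_prop) (fun t => by rw [iteratedDeriv_two_sin_mul, sq_sqrt hK.le])
      (sin_pos_of_pos_of_lt_pi (by positivity) hKℓ) hsin_mono
end
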